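/- arXiv:1010.4902 — 2 statements merged into one kernel-verified Lean document; each statement's English description precedes it below -/
import Mathlib

section
/- Let $-\infty\le a<b\le\infty$, $q:(a,b)\to\mathbb{R}$, $\lambda\in\mathbb{R}$, $z\in\mathbb{C}$, and let $\phi:(a,b)\to\mathbb{R}$ be twice differentiable with $\phi>0$ and $-\phi''+q\phi=\lambda\phi$ on $(a,b)$. If $u,v:(a,b)\to\mathbb{C}$ are twice differentiable with $-u''+qu=zu$ and $-v''+qv=zv$ on $(a,b)$, and $\hat u = -u'+\tfrac{\phi'}{\phi}u$, $\hat v = -v'+\tfrac{\phi'}{\phi}v$, then for every $x\in(a,b)$ one has $W_x(\hat u,\hat v) = (z-\lambda)\,W_x(u,v)$. -/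
/-! A positive solution `φ` at energy `λ` makes `m = φ'/φ` solve the Riccati equation
`m' = q - λ - m²`. Together with `u'' = (q - z) u` this gives `û' = (z - λ) u - m û`, so the
terms in `m` cancel in `W(û, v̂)`, leaving `(z - λ)(û v - u v̂) = (z - λ) W(u, v)`. -/

noncomputable def commutationTransform (m : ℝ → ℝ) (u : ℝ → ℂ) (x : ℝ) : ℂ :=
  -deriv u x + (m x : ℂ) * u x

theorem hasDerivAt_logDeriv_of_schrodinger {q phi : ℝ → ℝ} {lam x : ℝ}
    (hphi_d1 : DifferentiableAt ℝ phi x) (hphi_d2 : DifferentiableAt ℝ (deriv phi) x)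
    (hphi_ne : phi x ≠ 0) (hphi_eq : -deriv (deriv phi) x + q x * phi x = lam * phi x) :
    HasDerivAt (fun y => deriv phi y / phi y) (q x - lam - (deriv phi x / phi x) ^ 2) x := by
  refine (hphi_d2.hasDerivAt.div hphi_d1.hasDerivAt hphi_ne).congr_deriv ?_
  field_simp
  linear_combination (-phi x) * hphi_eq

theorem hasDerivAt_commutationTransform {m : ℝ → ℝ} {u : ℝ → ℂ} {q lam x : ℝ} {z : ℂ}
    (hm : HasDerivAt m (q - lam - m x ^ 2) x)
    (hu_d1 : DifferentiableAt ℝ u x) (hu_d2 : DifferentiableAt ℝ (deriv u) x)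
    (hu_eq : -deriv (deriv u) x + q * u x = z * u x) :
    HasDerivAt (commutationTransform m u) ((z - lam) * u x - m x * commutationTransform m u x) x := by
  refine (hu_d2.hasDerivAt.neg.add (hm.ofReal_comp.mul hu_d1.hasDerivAt)).congr_deriv ?_
  unfold commutationTransform
  push_cast
  linear_combination hu_eq

theorem wronskian_commutationTransform {m : ℝ → ℝ} {u v : ℝ → ℂ} {q lam x : ℝ} {z : ℂ}
    (hm : HasDerivAt m (q - lam - m x ^ 2) x)
    (hu_d1 : DifferentiableAt ℝ u x) (hu_d2 : DifferentiableAt ℝ (deriv u) x)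
    (hu_eq : -deriv (deriv u) x + q * u x = z * u x)
    (hv_d1 : DifferentiableAt ℝ v x) (hv_d2 : DifferentiableAt ℝ (deriv v) x)
    (hv_eq : -deriv (deriv v) x + q * v x = z * v x) :
    commutationTransform m u x * deriv (commutationTransform m v) x
        - deriv (commutationTransform m u) x * commutationTransform m v x
      = (z - lam) * (u x * deriv v x - deriv u x * v x) := by
  rw [(hasDerivAt_commutationTransform hm hu_d1 hu_d2 hu_eq).deriv,
    (hasDerivAt_commutationTransform hm hv_d1 hv_d2 hv_eq).deriv]
  unfold commutationTransform
  ring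

theorem stmt_1_general
    (q phi : ℝ → ℝ) (lam : ℝ) (z : ℂ) (u v : ℝ → ℂ)
    (E : Set ℝ)
    (hphi_d1 : ∀ x ∈ E, DifferentiableAt ℝ phi x)
    (hphi_d2 : ∀ x ∈ E, DifferentiableAt ℝ (deriv phi) x)
    (hphi_pos : ∀ x ∈ E, 0 < phi x)
    (hphi_eq : ∀ x ∈ E, -deriv (deriv phi) x + q x * phi x = lam * phi x)
    (hu_d1 : ∀ x ∈ E, DifferentiableAt ℝ u x)
    (hu_d2 : ∀ x ∈ E, DifferentiableAt ℝ (deriv u) x)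
    (hu_eq : ∀ x ∈ E, -deriv (deriv u) x + (q x : ℂ) * u x = z * u x)
    (hv_d1 : ∀ x ∈ E, DifferentiableAt ℝ v x)
    (hv_d2 : ∀ x ∈ E, DifferentiableAt ℝ (deriv v) x)
    (hv_eq : ∀ x ∈ E, -deriv (deriv v) x + (q x : ℂ) * v x = z * v x)
    (uhat vhat : ℝ → ℂ)
    (huhat : uhat = fun x => -deriv u x + ((deriv phi x / phi x : ℝ) : ℂ) * u x)
    (hvhat : vhat = fun x => -deriv v x + ((deriv phi x / phi x : ℝ) : ℂ) * v x) :
    ∀ x ∈ E,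
      uhat x * deriv vhat x - deriv uhat x * vhat x
        = (z - lam) * (u x * deriv v x - deriv u x * v x) := by
  intro x hx
  subst huhat hvhat
  have hm := hasDerivAt_logDeriv_of_schrodinger (hphi_d1 x hx) (hphi_d2 x hx)
    (hphi_pos x hx).ne' (hphi_eq x hx)
  exact wronskian_commutationTransform hm (hu_d1 x hx) (hu_d2 x hx) (hu_eq x hx)
    (hv_d1 x hx) (hv_d2 x hx) (hv_eq x hx)

/-- If `û, v̂` are the single commutation transforms
`-u' + (φ'/φ)u`, `-v' + (φ'/φ)v` of two solutions `u, v` of `-w'' + q w = z w`,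
where `φ > 0` solves `-φ'' + q φ = λ φ`, then
`W_x(û, v̂) = (z - λ) W_x(u, v)` on `(a,b)`. -/
theorem stmt_1 (a b : EReal) (hab : a < b)
    (q phi : ℝ → ℝ) (lam : ℝ) (z : ℂ) (u v : ℝ → ℂ)
    (E : Set ℝ) (hE : E = {x : ℝ | a < (x : EReal) ∧ (x : EReal) < b})
    (hphi_d1 : ∀ x ∈ E, DifferentiableAt ℝ phi x)
    (hphi_d2 : ∀ x ∈ E, DifferentiableAt ℝ (deriv phi) x)
    (hphi_pos : ∀ x ∈ E, 0 < phi x)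
    (hphi_eq : ∀ x ∈ E, -deriv (deriv phi) x + q x * phi x = lam * phi x)
    (hu_d1 : ∀ x ∈ E, DifferentiableAt ℝ u x)
    (hu_d2 : ∀ x ∈ E, DifferentiableAt ℝ (deriv u) x)
    (hu_eq : ∀ x ∈ E, -deriv (deriv u) x + (q x : ℂ) * u x = z * u x)
    (hv_d1 : ∀ x ∈ E, DifferentiableAt ℝ v x)
    (hv_d2 : ∀ x ∈ E, DifferentiableAt ℝ (deriv v) x)
    (hv_eq : ∀ x ∈ E, -deriv (deriv v) x + (q x : ℂ) * v x = z * v x)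
    (uhat vhat : ℝ → ℂ)
    (huhat : uhat = fun x => -deriv u x + ((deriv phi x / phi x : ℝ) : ℂ) * u x)
    (hvhat : vhat = fun x => -deriv v x + ((deriv phi x / phi x : ℝ) : ℂ) * v x) :
    ∀ x ∈ E,
      uhat x * deriv vhat x - deriv uhat x * vhat x
        = (z - lam) * (u x * deriv v x - deriv u x * v x) :=
  stmt_1_general q phi lam z u v E hphi_d1 hphi_d2 hphi_pos hphi_eq hu_d1 hu_d2 hu_eq hv_d1 hv_d2
    hv_eq uhat vhat huhat hvhat
end

section
/- Let $-\infty\le a<b\le\infty$, $q:(a,b)\to\mathbb{R}$, $\lambda\in\mathbb{R}$, and let $\phi_\lambda:(a,b)\to\mathbb{R}$ be twice differentiable with $-\phi_\lambda''+q\phi_\lambda=\lambda\phi_\lambda$ on $(a,b)$. Let $S:(a,b)\to\mathbb{R}$ be differentiable with $S'=\phi_\lambda^2$ and $S>0$ on $(a,b)$, and set $\tilde\phi=\phi_\lambda/S$. Then for every $z\in\mathbb{C}$ with $z\ne\lambda$ and every twice differentiable $u:(a,b)\to\mathbb{C}$ solving $-u''+qu=zu$ on $(a,b)$, the double commutation transform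 $u_S(x)=u(x)+\tfrac{1}{z-\lambda}\tilde\phi(x)W_x(\phi_\lambda,u)$ satisfies, for every $x\in(a,b)$, the identity $|u_S(x)|^2 = |u(x)|^2 - \tfrac{1}{|z-\lambda|^2}\,\tfrac{d}{dx}\Big(\tfrac{|W_x(\phi_\lambda,u)|^2}{S(x)}\Big)$. -/
/-!
Since `φ_λ` and `u` solve the same equation at the energies `λ` and `z`, the Wronskian satisfies
`W(φ_λ, u)' = (λ - z) φ_λ u`. Differentiating `|W|² / S` by the quotient rule, with `S' = φ_λ²`,
produces exactly the cross term `2 Re ⟪u, φ_λ W / ((z - λ) S)⟫` (from `W'`) and the square term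
`|φ_λ W|² / (|z - λ|² S²)` (from `S'`) of the expansion of `|u_S|² - |u|²`, up to the factor
`-|z - λ|²`.
-/

noncomputable def wronskian (φ : ℝ → ℝ) (u : ℝ → ℂ) (x : ℝ) : ℂ :=
  φ x * deriv u x - deriv φ x * u x

theorem hasDerivAt_wronskian {φ : ℝ → ℝ} {u : ℝ → ℂ} {x : ℝ}
    (hφ : DifferentiableAt ℝ φ x) (hφ' : DifferentiableAt ℝ (deriv φ) x)
    (hu : DifferentiableAt ℝ u x) (hu' : DifferentiableAt ℝ (deriv u) x) :
    HasDerivAt (wronskian φ u) (φ x * deriv (deriv u) x - deriv (deriv φ) x * u x) x := by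
  have h := (hφ.hasDerivAt.ofReal_comp.mul hu'.hasDerivAt).sub
    (hφ'.hasDerivAt.ofReal_comp.mul hu.hasDerivAt)
  exact h.congr_deriv (by ring)

theorem hasDerivAt_wronskian_of_schrodinger {q φ : ℝ → ℝ} {u : ℝ → ℂ} {lam : ℝ} {z : ℂ}
    {x : ℝ} (hφ : DifferentiableAt ℝ φ x) (hφ' : DifferentiableAt ℝ (deriv φ) x)
    (hu : DifferentiableAt ℝ u x) (hu' : DifferentiableAt ℝ (deriv u) x)
    (hφ_eq : -deriv (deriv φ) x + q x * φ x = lam * φ x)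
    (hu_eq : -deriv (deriv u) x + q x * u x = z * u x) :
    HasDerivAt (wronskian φ u) ((lam - z) * φ x * u x) x := by
  convert hasDerivAt_wronskian hφ hφ' hu hu' using 1
  have hφ_eq' : -deriv (deriv φ) x + (q x : ℂ) * φ x = lam * φ x := by exact_mod_cast hφ_eq
  linear_combination φ x * hu_eq - u x * hφ_eq'

theorem norm_sq_sub_norm_sq_add_inv_mul {c : ℂ} (hc : c ≠ 0) {p s : ℝ} (hs : s ≠ 0) (U W : ℂ) :
    ‖c‖ ^ 2 * (‖U‖ ^ 2 - ‖U + c⁻¹ * ((p / s : ℝ) : ℂ) * W‖ ^ 2)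
      = (2 * inner ℝ W (-c * p * U) * s - ‖W‖ ^ 2 * p ^ 2) / s ^ 2 := by
  have hc' : c.re ^ 2 + c.im ^ 2 ≠ 0 := by
    simpa [Complex.normSq_apply, sq] using (Complex.normSq_pos.mpr hc).ne'
  rw [Complex.inner, Complex.inv_def]
  simp only [Complex.sq_norm, Complex.normSq_apply, Complex.add_re, Complex.add_im,
    Complex.mul_re, Complex.mul_im, Complex.neg_re, Complex.neg_im, Complex.ofReal_re,
    Complex.ofReal_im, Complex.conj_re, Complex.conj_im]
  field_simp
  ring

theorem hasDerivAt_norm_sq_wronskian_div {q φ S : ℝ → ℝ} {u : ℝ → ℂ} {lam : ℝ} {z : ℂ}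
    {x : ℝ} (hz : z ≠ lam) (hφ : DifferentiableAt ℝ φ x) (hφ' : DifferentiableAt ℝ (deriv φ) x)
    (hu : DifferentiableAt ℝ u x) (hu' : DifferentiableAt ℝ (deriv u) x)
    (hφ_eq : -deriv (deriv φ) x + q x * φ x = lam * φ x)
    (hu_eq : -deriv (deriv u) x + q x * u x = z * u x)
    (hS : HasDerivAt S (φ x ^ 2) x) (hS_ne : S x ≠ 0) :
    HasDerivAt (fun y => ‖wronskian φ u y‖ ^ 2 / S y)
      (‖z - lam‖ ^ 2 *
        (‖u x‖ ^ 2 - ‖u x + (z - lam)⁻¹ * ((φ x / S x : ℝ) : ℂ) * wronskian φ u x‖ ^ 2)) x := by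
  have hW := hasDerivAt_wronskian_of_schrodinger hφ hφ' hu hu' hφ_eq hu_eq
  rw [norm_sq_sub_norm_sq_add_inv_mul (sub_ne_zero.mpr hz) hS_ne, neg_sub]
  exact hW.norm_sq.div hS hS_ne

theorem stmt_6_general
    (q phil Sw : ℝ → ℝ) (lam : ℝ)
    (E : Set ℝ)
    (hl_d1 : ∀ x ∈ E, DifferentiableAt ℝ phil x)
    (hl_d2 : ∀ x ∈ E, DifferentiableAt ℝ (deriv phil) x)
    (hl_eq : ∀ x ∈ E, -deriv (deriv phil) x + q x * phil x = lam * phil x)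
    (hS_d : ∀ x ∈ E, HasDerivAt Sw (phil x ^ 2) x)
    (hS_pos : ∀ x ∈ E, 0 < Sw x) :
    ∀ z : ℂ, z ≠ (lam : ℂ) → ∀ u : ℝ → ℂ,
      (∀ x ∈ E, DifferentiableAt ℝ u x) →
      (∀ x ∈ E, DifferentiableAt ℝ (deriv u) x) →
      (∀ x ∈ E, -deriv (deriv u) x + (q x : ℂ) * u x = z * u x) →
      ∀ uS : ℝ → ℂ,
        uS = (fun x => u x + (z - lam)⁻¹ * ((phil x / Sw x : ℝ) : ℂ) *
          (Complex.ofReal (phil x) * deriv u x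
            - Complex.ofReal (deriv phil x) * u x)) →
        ∀ x ∈ E,
          ‖uS x‖ ^ 2
            = ‖u x‖ ^ 2
              - (‖z - lam‖ ^ 2)⁻¹ *
                deriv (fun y =>
                  ‖Complex.ofReal (phil y) * deriv u y
                    - Complex.ofReal (deriv phil y) * u y‖ ^ 2 / Sw y) x := by
  intro z hz u hu_d1 hu_d2 hu_eq uS rfl x hx
  have hz' : ‖z - lam‖ ^ 2 ≠ 0 := pow_ne_zero 2 (norm_ne_zero_iff.mpr (sub_ne_zero.mpr hz))
  have hderiv := (hasDerivAt_norm_sq_wronskian_div hz (hl_d1 x hx) (hl_d2 x hx) (hu_d1 x hx)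
    (hu_d2 x hx) (hl_eq x hx) (hu_eq x hx) (hS_d x hx) (hS_pos x hx).ne').deriv
  simp only [wronskian] at hderiv
  rw [hderiv, inv_mul_cancel_left₀ hz', sub_sub_cancel]

/-- for the double commutation transform
`u_S = u + (z-λ)⁻¹ (φ_λ/S) W(φ_λ,u)` (with `S' = φ_λ²`, `S > 0`) one has
`|u_S(x)|² = |u(x)|² - |z-λ|⁻² d/dx ( |W_x(φ_λ,u)|² / S(x) )`. -/
theorem stmt_6 (a b : EReal) (hab : a < b)
    (q phil Sw : ℝ → ℝ) (lam : ℝ)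
    (E : Set ℝ) (hE : E = {x : ℝ | a < (x : EReal) ∧ (x : EReal) < b})
    (hl_d1 : ∀ x ∈ E, DifferentiableAt ℝ phil x)
    (hl_d2 : ∀ x ∈ E, DifferentiableAt ℝ (deriv phil) x)
    (hl_eq : ∀ x ∈ E, -deriv (deriv phil) x + q x * phil x = lam * phil x)
    (hS_d : ∀ x ∈ E, HasDerivAt Sw (phil x ^ 2) x)
    (hS_pos : ∀ x ∈ E, 0 < Sw x) :
    ∀ z : ℂ, z ≠ (lam : ℂ) → ∀ u : ℝ → ℂ,
      (∀ x ∈ E, DifferentiableAt ℝ u x) →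
      (∀ x ∈ E, DifferentiableAt ℝ (deriv u) x) →
      (∀ x ∈ E, -deriv (deriv u) x + (q x : ℂ) * u x = z * u x) →
      ∀ uS : ℝ → ℂ,
        uS = (fun x => u x + (z - lam)⁻¹ * ((phil x / Sw x : ℝ) : ℂ) *
          (Complex.ofReal (phil x) * deriv u x
            - Complex.ofReal (deriv phil x) * u x)) →
        ∀ x ∈ E,
          ‖uS x‖ ^ 2
            = ‖u x‖ ^ 2
              - (‖z - lam‖ ^ 2)⁻¹ *
                deriv (fun y =>
                  ‖Complex.ofReal (phil y) * deriv u y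
                    - Complex.ofReal (deriv phil y) * u y‖ ^ 2 / Sw y) x :=
  stmt_6_general q phil Sw lam E hl_d1 hl_d2 hl_eq hS_d hS_pos
end
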